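/- arXiv:2211.07568 — 4 statements merged into one kernel-verified Lean document; each statement's English description precedes it below -/
import Mathlib

section
/- Let n = (n1,n2) ∈ ℝ² be a unit vector with tangent t = (-n2, n1). Let Λ, Θ, θν, φν ∈ ℝ and set ν⃗ = (cos φν cos θν, sin φν cos θν, sin θν), n⃗1 = (t1 cos Θ, t2 cos Θ, -sin Θ), n⃗2 = (t1 sin Θ, t2 sin Θ, cos Θ). Then the 4×4 matrix M_Γ := sin(Λ) (σ0 ⊗ (σ⃗·n⃗1)) + cos(Λ) ((σ⃗·ν⃗) ⊗ (σ⃗·n⃗2)) is Hermitian, unitary, traceless, and anticommutes with σ0 ⊗ (n1 σ1 + n2 σ2). -/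
open Matrix Kronecker

noncomputable section

def σ0 : Matrix (Fin 2) (Fin 2) ℂ := 1
def σ1 : Matrix (Fin 2) (Fin 2) ℂ := !![0, 1; 1, 0]
def σ2 : Matrix (Fin 2) (Fin 2) ℂ := !![0, -Complex.I; Complex.I, 0]
def σ3 : Matrix (Fin 2) (Fin 2) ℂ := !![1, 0; 0, -1]

/-- σ⃗·v for v ∈ ℝ³ -/
def pauliVec (v : Fin 3 → ℝ) : Matrix (Fin 2) (Fin 2) ℂ :=
  (v 0 : ℂ) • σ1 + (v 1 : ℂ) • σ2 + (v 2 : ℂ) • σ3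

/-- m_η with tangent (t1,t2) -/
def mEta (t1 t2 η : ℝ) : Matrix (Fin 2) (Fin 2) ℂ :=
  (Real.cos η : ℂ) • ((t1 : ℂ) • σ1 + (t2 : ℂ) • σ2) + (Real.sin η : ℂ) • σ3
/-- The general boundary matrix M_Γ with tangent (t1,t2). -/
def MGamma (t1 t2 Λ Θ θν φν : ℝ) : Matrix (Fin 2 × Fin 2) (Fin 2 × Fin 2) ℂ :=
  (Real.sin Λ : ℂ) • (σ0 ⊗ₖ pauliVec ![t1 * Real.cos Θ, t2 * Real.cos Θ, -Real.sin Θ]) +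
  (Real.cos Λ : ℂ) •
    (pauliVec ![Real.cos φν * Real.cos θν, Real.sin φν * Real.cos θν, Real.sin θν] ⊗ₖ
      pauliVec ![t1 * Real.sin Θ, t2 * Real.sin Θ, Real.cos Θ])

lemma pauli_anticomm (v w : Fin 3 → ℝ) :
    pauliVec v * pauliVec w + pauliVec w * pauliVec v =
      ((2 * (v 0 * w 0 + v 1 * w 1 + v 2 * w 2) : ℝ) : ℂ) • 1 := by
  unfold pauliVec σ1 σ2 σ3
  ext i j
  fin_cases i <;> fin_cases j <;>
    simp [Matrix.mul_apply, Fin.sum_univ_succ, Matrix.one_apply, Complex.I_sq] <;> ring_nf <;>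
    simp [Complex.I_sq] <;> ring

lemma pauli_herm (v : Fin 3 → ℝ) : (pauliVec v)ᴴ = pauliVec v := by
  unfold pauliVec σ1 σ2 σ3
  ext i j
  fin_cases i <;> fin_cases j <;>
    simp [Matrix.conjTranspose_apply] <;> ring

lemma pauli_trace (v : Fin 3 → ℝ) : (pauliVec v).trace = 0 := by
  unfold pauliVec σ1 σ2 σ3
  simp [Matrix.trace, Matrix.diag, Fin.sum_univ_succ]

lemma kron_conjT (A B : Matrix (Fin 2) (Fin 2) ℂ) : (A ⊗ₖ B)ᴴ = Aᴴ ⊗ₖ Bᴴ := by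
  ext i j
  simp [Matrix.conjTranspose_apply]

lemma pauli_sq (v : Fin 3 → ℝ) (hv : v 0 * v 0 + v 1 * v 1 + v 2 * v 2 = 1) :
    pauliVec v * pauliVec v = 1 := by
  have h := pauli_anticomm v v
  rw [hv] at h
  have h2 : (2 : ℂ) • (pauliVec v * pauliVec v) =
      (2 : ℂ) • (1 : Matrix (Fin 2) (Fin 2) ℂ) := by
    rw [two_smul, h]
    norm_num
  exact smul_right_injective _ (by norm_num) h2

theorem MGamma_admissible (n1 n2 Λ Θ θν φν : ℝ) (hn : n1 ^ 2 + n2 ^ 2 = 1) :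
    (MGamma (-n2) n1 Λ Θ θν φν).IsHermitian ∧
    MGamma (-n2) n1 Λ Θ θν φν ∈ unitary (Matrix (Fin 2 × Fin 2) (Fin 2 × Fin 2) ℂ) ∧
    (MGamma (-n2) n1 Λ Θ θν φν).trace = 0 ∧
    MGamma (-n2) n1 Λ Θ θν φν * (σ0 ⊗ₖ ((n1 : ℂ) • σ1 + (n2 : ℂ) • σ2)) +
      (σ0 ⊗ₖ ((n1 : ℂ) • σ1 + (n2 : ℂ) • σ2)) * MGamma (-n2) n1 Λ Θ θν φν = 0 := by
  set v1 : Fin 3 → ℝ := ![(-n2) * Real.cos Θ, n1 * Real.cos Θ, -Real.sin Θ] with hv1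
  set v2 : Fin 3 → ℝ := ![(-n2) * Real.sin Θ, n1 * Real.sin Θ, Real.cos Θ] with hv2
  set ν : Fin 3 → ℝ := ![Real.cos φν * Real.cos θν, Real.sin φν * Real.cos θν, Real.sin θν]
    with hν
  have hM : MGamma (-n2) n1 Λ Θ θν φν =
      (Real.sin Λ : ℂ) • (σ0 ⊗ₖ pauliVec v1) +
      (Real.cos Λ : ℂ) • (pauliVec ν ⊗ₖ pauliVec v2) := rfl
  have hσ0 : σ0ᴴ = σ0 := by simp [σ0]
  have hHerm : (MGamma (-n2) n1 Λ Θ θν φν).IsHermitian := by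
    rw [Matrix.IsHermitian, hM]
    simp only [conjTranspose_add, conjTranspose_smul, kron_conjT, pauli_herm, hσ0]
    simp only [Complex.star_def, Complex.conj_ofReal]
  have hv1sq : v1 0 * v1 0 + v1 1 * v1 1 + v1 2 * v1 2 = 1 := by
    simp only [hv1]; simp; nlinarith [Real.sin_sq_add_cos_sq Θ]
  have hv2sq : v2 0 * v2 0 + v2 1 * v2 1 + v2 2 * v2 2 = 1 := by
    simp only [hv2]; simp; nlinarith [Real.sin_sq_add_cos_sq Θ]
  have hνsq : ν 0 * ν 0 + ν 1 * ν 1 + ν 2 * ν 2 = 1 := by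
    simp only [hν]; simp; nlinarith [Real.sin_sq_add_cos_sq θν, Real.sin_sq_add_cos_sq φν]
  have hanti : pauliVec v1 * pauliVec v2 + pauliVec v2 * pauliVec v1 = 0 := by
    rw [pauli_anticomm]
    have : v1 0 * v2 0 + v1 1 * v2 1 + v1 2 * v2 2 = 0 := by
      simp only [hv1, hv2]; simp
      linear_combination (Real.cos Θ * Real.sin Θ) * hn
    rw [this]; simp
  have hcross : pauliVec v2 * pauliVec v1 = -(pauliVec v1 * pauliVec v2) :=
    eq_neg_of_add_eq_zero_right hanti
  have hMsq : MGamma (-n2) n1 Λ Θ θν φν * MGamma (-n2) n1 Λ Θ θν φν = 1 := by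
    rw [hM]
    simp only [Matrix.add_mul, Matrix.mul_add, Matrix.smul_mul, Matrix.mul_smul,
      ← Matrix.mul_kronecker_mul, smul_smul]
    rw [pauli_sq v1 hv1sq, pauli_sq v2 hv2sq, pauli_sq ν hνsq, hcross]
    have hσ0m : σ0 * σ0 = σ0 := by simp [σ0]
    have hσ0l : σ0 * pauliVec ν = pauliVec ν := by simp [σ0]
    have hσ0r : pauliVec ν * σ0 = pauliVec ν := by simp [σ0]
    rw [hσ0m, hσ0l, hσ0r]
    have e1 : (σ0 ⊗ₖ (1 : Matrix (Fin 2) (Fin 2) ℂ)) = 1 := by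
      rw [σ0]; exact Matrix.one_kronecker_one
    have e2 : ((1 : Matrix (Fin 2) (Fin 2) ℂ) ⊗ₖ (1 : Matrix (Fin 2) (Fin 2) ℂ)) = 1 :=
      Matrix.one_kronecker_one
    have e3 : pauliVec ν ⊗ₖ (-(pauliVec v1 * pauliVec v2)) =
        -(pauliVec ν ⊗ₖ (pauliVec v1 * pauliVec v2)) := by
      ext i j; simp [Matrix.kroneckerMap_apply]
    rw [e1, e2, e3]
    match_scalars
    · push_cast
      linear_combination Complex.sin_sq_add_cos_sq (Λ : ℂ)
    · push_cast; ring
  have hUnit : MGamma (-n2) n1 Λ Θ θν φν ∈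
      unitary (Matrix (Fin 2 × Fin 2) (Fin 2 × Fin 2) ℂ) := by
    constructor
    · rw [star_eq_conjTranspose, hHerm, hMsq]
    · rw [star_eq_conjTranspose, hHerm, hMsq]
  have hTr : (MGamma (-n2) n1 Λ Θ θν φν).trace = 0 := by
    rw [hM]
    simp [Matrix.trace_kronecker, pauli_trace]
  refine ⟨hHerm, hUnit, hTr, ?_⟩
  -- anticommutation
  have hNp : ((n1 : ℂ) • σ1 + (n2 : ℂ) • σ2) = pauliVec ![n1, n2, 0] := by
    simp [pauliVec]
  rw [hNp, hM]
  set N : Fin 3 → ℝ := ![n1, n2, 0] with hN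
  have h1 : pauliVec v1 * pauliVec N + pauliVec N * pauliVec v1 = 0 := by
    rw [pauli_anticomm]
    have : v1 0 * N 0 + v1 1 * N 1 + v1 2 * N 2 = 0 := by
      simp only [hv1, hN]; simp; ring
    rw [this]; simp
  have h2 : pauliVec v2 * pauliVec N + pauliVec N * pauliVec v2 = 0 := by
    rw [pauli_anticomm]
    have : v2 0 * N 0 + v2 1 * N 1 + v2 2 * N 2 = 0 := by
      simp only [hv2, hN]; simp; ring
    rw [this]; simp
  have hc1 : pauliVec N * pauliVec v1 = -(pauliVec v1 * pauliVec N) :=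
    eq_neg_of_add_eq_zero_right h1
  have hc2 : pauliVec N * pauliVec v2 = -(pauliVec v2 * pauliVec N) :=
    eq_neg_of_add_eq_zero_right h2
  simp only [Matrix.add_mul, Matrix.mul_add, Matrix.smul_mul, Matrix.mul_smul,
    ← Matrix.mul_kronecker_mul, smul_smul]
  have hσ0m : σ0 * σ0 = σ0 := by simp [σ0]
  have hσ0l : σ0 * pauliVec ν = pauliVec ν := by simp [σ0]
  have hσ0r : pauliVec ν * σ0 = pauliVec ν := by simp [σ0]
  rw [hσ0m, hσ0l, hσ0r, hc1, hc2]
  have e4 : σ0 ⊗ₖ (-(pauliVec v1 * pauliVec N)) = -(σ0 ⊗ₖ (pauliVec v1 * pauliVec N)) := by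
    ext i j; simp [Matrix.kroneckerMap_apply]
  have e5 : pauliVec ν ⊗ₖ (-(pauliVec v2 * pauliVec N)) =
      -(pauliVec ν ⊗ₖ (pauliVec v2 * pauliVec N)) := by
    ext i j; simp [Matrix.kroneckerMap_apply]
  rw [e4, e5]
  match_scalars <;> push_cast <;> ring
end
end

section
/- Let c⃗_0, c⃗_1, c⃗_2, c⃗_3 ∈ ℝ³ and set M = Σ_{i=0}^{3} σ_i ⊗ (σ⃗·c⃗_i). If M² = I₄, then c⃗_1 × c⃗_2 = 0, c⃗_3 × c⃗_1 = 0, c⃗_3 × c⃗_2 = 0, c⃗_0 · c⃗_1 = c⃗_0 · c⃗_2 = c⃗_0 · c⃗_3 = 0, and |c⃗_0|² + |c⃗_1|² + |c⃗_2|² + |c⃗_3|² = 1. -/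
open Matrix Kronecker

noncomputable section

/-!
The sixteen matrices `σₐ ⊗ σ_b` are orthogonal for the trace form `(X, Y) ↦ tr (X Y)`, hence
linearly independent. Expanding `M²` in this basis with `(σ⃗·a)(σ⃗·b) = (a·b) σ0 + i σ⃗·(a × b)`
gives the coefficient `Σ |cᵢ|²` at `σ0 ⊗ σ0`, `2 c₀·cⱼ` at `σⱼ ⊗ σ0` and `-2 (cⱼ₊₁ × cⱼ₊₂)ₗ` at
`σⱼ ⊗ σₗ` (indices of `c` cyclic in `1, 2, 3`); comparing with `I₄ = σ0 ⊗ σ0` gives the claim.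
-/

def pauli : Fin 4 → Matrix (Fin 2) (Fin 2) ℂ := ![σ0, σ1, σ2, σ3]

theorem trace_pauli_mul_pauli (a b : Fin 4) :
    trace (pauli a * pauli b) = if a = b then 2 else 0 := by
  fin_cases a <;> fin_cases b <;>
    simp [pauli, σ0, σ1, σ2, σ3, trace, Fin.sum_univ_two, one_add_one_eq_two]

theorem trace_pauli_kron_mul_pauli_kron (a b a' b' : Fin 4) :
    trace ((pauli a ⊗ₖ pauli b) * (pauli a' ⊗ₖ pauli b')) =
      if a = a' ∧ b = b' then 4 else 0 := by
  rw [← mul_kronecker_mul, trace_kronecker, trace_pauli_mul_pauli, trace_pauli_mul_pauli]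
  split_ifs <;> simp_all
  norm_num

theorem linearIndependent_pauli_kron :
    LinearIndependent ℝ fun p : Fin 4 × Fin 4 => pauli p.1 ⊗ₖ pauli p.2 := by
  refine Fintype.linearIndependent_iff.mpr fun g hg q => ?_
  have := congrArg (fun X => trace ((pauli q.1 ⊗ₖ pauli q.2) * X)) hg
  simp only [Finset.mul_sum, trace_sum, mul_smul_comm, trace_smul,
    trace_pauli_kron_mul_pauli_kron] at this
  simpa [← Prod.ext_iff] using this

def kronSquareCoeffs (c : Fin 4 → Fin 3 → ℝ) : Fin 4 → Fin 4 → ℝ :=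
  ![![∑ i, c i ⬝ᵥ c i, 0, 0, 0],
    vecCons (2 * c 0 ⬝ᵥ c 1) (-2 • crossProduct (c 2) (c 3)),
    vecCons (2 * c 0 ⬝ᵥ c 2) (-2 • crossProduct (c 3) (c 1)),
    vecCons (2 * c 0 ⬝ᵥ c 3) (-2 • crossProduct (c 1) (c 2))]

set_option maxHeartbeats 1000000 in
theorem kron_sq_eq_sum_pauli_kron (c : Fin 4 → Fin 3 → ℝ) :
    (∑ i, pauli i ⊗ₖ pauliVec (c i)) * (∑ i, pauli i ⊗ₖ pauliVec (c i)) =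
      ∑ p : Fin 4 × Fin 4, kronSquareCoeffs c p.1 p.2 • (pauli p.1 ⊗ₖ pauli p.2) := by
  ext ⟨i, j⟩ ⟨k, l⟩
  fin_cases i <;> fin_cases j <;> fin_cases k <;> fin_cases l <;> apply Complex.ext <;>
    simp [Fintype.sum_prod_type, Fin.sum_univ_four, Fin.sum_univ_two, mul_apply,
      kronSquareCoeffs, pauli, σ0, σ1, σ2, σ3, pauliVec, dotProduct, crossProduct,
      Fin.sum_univ_three] <;>
    ring

theorem one_eq_sum_pauli_kron :
    (1 : Matrix (Fin 2 × Fin 2) (Fin 2 × Fin 2) ℂ) =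
      ∑ p : Fin 4 × Fin 4,
        (![![1, 0, 0, 0], 0, 0, 0] : Fin 4 → Fin 4 → ℝ) p.1 p.2 • (pauli p.1 ⊗ₖ pauli p.2) := by
  simp [Fintype.sum_prod_type, Fin.sum_univ_four, pauli, σ0]

theorem square_one_conditions (c : Fin 4 → Fin 3 → ℝ)
    (hM : (∑ i : Fin 4, ![σ0, σ1, σ2, σ3] i ⊗ₖ pauliVec (c i)) *
        (∑ i : Fin 4, ![σ0, σ1, σ2, σ3] i ⊗ₖ pauliVec (c i)) = 1) :
    crossProduct (c 1) (c 2) = 0 ∧ crossProduct (c 3) (c 1) = 0 ∧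
    crossProduct (c 3) (c 2) = 0 ∧
    c 0 ⬝ᵥ c 1 = 0 ∧ c 0 ⬝ᵥ c 2 = 0 ∧ c 0 ⬝ᵥ c 3 = 0 ∧
    c 0 ⬝ᵥ c 0 + c 1 ⬝ᵥ c 1 + c 2 ⬝ᵥ c 2 + c 3 ⬝ᵥ c 3 = 1 := by
  have hcoeffs : kronSquareCoeffs c = ![![1, 0, 0, 0], 0, 0, 0] := by
    have := Fintype.linearIndependent_iffₛ.mp linearIndependent_pauli_kron _ _
      ((kron_sq_eq_sum_pauli_kron c).symm.trans (hM.trans one_eq_sum_pauli_kron))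
    exact funext fun a => funext fun b => this (a, b)
  simp only [kronSquareCoeffs, Fin.sum_univ_four, vecCons_inj, cons_eq_zero_iff, smul_eq_zero,
    mul_eq_zero] at hcoeffs
  norm_num at hcoeffs
  obtain ⟨hnorm, ⟨h01, h23⟩, ⟨h02, h31⟩, h03, h12⟩ := hcoeffs
  exact ⟨h12, h31, by rw [← cross_anticomm, h23, neg_zero], h01, h02, h03, hnorm⟩
end
end

section
/- Suppose a 4×4 Hermitian matrix M is anti-diagonal with unit-modulus entries M_{41} = δ_A and M_{32} = δ_B (and M_{14} = δ_A*, M_{23} = δ_B*). If M can be written as (σ⃗·ν⃗) ⊗ (σ⃗·τ⃗) with ν⃗ = (Re ν, Im ν, 0), τ⃗ = (Re t, Im t, 0) for unit complex ν, t, then necessarily δ_A/δ_B = t² and ν = t* δ_A. -/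
open Matrix Kronecker

noncomputable section

/-- The anti-diagonal 4×4 matrix with entries M₁₄ = δA*, M₂₃ = δB*, M₃₂ = δB, M₄₁ = δA. -/
def antiDiag (δA δB : ℂ) : Matrix (Fin 2 × Fin 2) (Fin 2 × Fin 2) ℂ :=
  (!![0, 1; 0, 0] : Matrix (Fin 2) (Fin 2) ℂ) ⊗ₖ !![0, starRingEnd ℂ δA; starRingEnd ℂ δB, 0] +
  (!![0, 0; 1, 0] : Matrix (Fin 2) (Fin 2) ℂ) ⊗ₖ !![0, δB; δA, 0]

/-! The (4,1) and (3,2) entries of the Kronecker product are `ν t` and `ν t̄`, because for a planar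
vector `v` the lower-left and upper-right entries of `σ⃗·v` are `v₁ + i v₂` and its conjugate.
Since `t t̄ = 1`, both claims are then algebra. -/

theorem pauliVec_apply_one_zero (v : Fin 3 → ℝ) : pauliVec v 1 0 = v 0 + v 1 * Complex.I := by
  simp [pauliVec, σ1, σ2, σ3, mul_comm]

theorem pauliVec_apply_zero_one (v : Fin 3 → ℝ) : pauliVec v 0 1 = v 0 - v 1 * Complex.I := by
  simp [pauliVec, σ1, σ2, σ3, sub_eq_add_neg, mul_comm]

theorem pauliVec_planar_apply_one_zero (z : ℂ) : pauliVec ![z.re, z.im, 0] 1 0 = z := by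
  simpa using pauliVec_apply_one_zero ![z.re, z.im, 0]

theorem pauliVec_planar_apply_zero_one (z : ℂ) :
    pauliVec ![z.re, z.im, 0] 0 1 = starRingEnd ℂ z := by
  rw [pauliVec_apply_zero_one]
  exact (RCLike.conj_eq_re_sub_im z).symm

theorem antiDiag_apply_one_one_zero_zero (δA δB : ℂ) : antiDiag δA δB (1, 1) (0, 0) = δA := by
  simp [antiDiag]

theorem antiDiag_apply_one_zero_zero_one (δA δB : ℂ) : antiDiag δA δB (1, 0) (0, 1) = δB := by
  simp [antiDiag]

theorem mul_conj_eq_one_of_norm_eq_one {z : ℂ} (hz : ‖z‖ = 1) : z * starRingEnd ℂ z = 1 := by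
  rw [Complex.mul_conj', hz, Complex.ofReal_one, one_pow]

theorem armchair_matrix_necessary_general (δA δB ν t : ℂ)
    (hB : ‖δB‖ = 1) (ht : ‖t‖ = 1)
    (h : antiDiag δA δB =
      pauliVec ![ν.re, ν.im, 0] ⊗ₖ pauliVec ![t.re, t.im, 0]) :
    δA / δB = t ^ 2 ∧ ν = starRingEnd ℂ t * δA := by
  have hδA : δA = ν * t := by
    simpa only [antiDiag_apply_one_one_zero_zero, kronecker_apply, pauliVec_planar_apply_one_zero]
      using congr_fun₂ h (1, 1) (0, 0)
  have hδB : δB = ν * starRingEnd ℂ t := by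
    simpa only [antiDiag_apply_one_zero_zero_one, kronecker_apply, pauliVec_planar_apply_one_zero,
      pauliVec_planar_apply_zero_one] using congr_fun₂ h (1, 0) (0, 1)
  have htt := mul_conj_eq_one_of_norm_eq_one ht
  have hB0 : δB ≠ 0 := norm_ne_zero_iff.mp (hB ▸ one_ne_zero)
  constructor
  · rw [div_eq_iff hB0, hδA, hδB]
    linear_combination (-(ν * t)) * htt
  · rw [hδA]
    linear_combination (-ν) * htt

theorem armchair_matrix_necessary (δA δB ν t : ℂ) (hA : ‖δA‖ = 1)
    (hB : ‖δB‖ = 1) (hν : ‖ν‖ = 1) (ht : ‖t‖ = 1)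
    (h : antiDiag δA δB =
      pauliVec ![ν.re, ν.im, 0] ⊗ₖ pauliVec ![t.re, t.im, 0]) :
    δA / δB = t ^ 2 ∧ ν = starRingEnd ℂ t * δA :=
  armchair_matrix_necessary_general δA δB ν t hB ht h
end
end

section
/- For any unit vector n ∈ ℝ² with tangent t = (-n2, n1) and angles η+, η-, the block-diagonal matrix m_{η+} ⊕ m_{η-} (with m_η = cos η (t1σ1 + t2σ2) + sin η σ3) equals sin(Λ)(σ0 ⊗ (σ⃗·n⃗1)) + cos(Λ)(σ3 ⊗ (σ⃗·n⃗2)), where Λ = π/2 - (η+ - η-)/2, Θ = -(η+ + η-)/2, n⃗1 = (t1 cos Θ, t2 cos Θ, -sin Θ), n⃗2 = (t1 sin Θ, t2 sin Θ, cos Θ). -/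
open Matrix Kronecker

noncomputable section

theorem block_diag_as_MGamma (n1 n2 ηp ηm : ℝ) (hn : n1 ^ 2 + n2 ^ 2 = 1) :
    (!![1, 0; 0, 0] : Matrix (Fin 2) (Fin 2) ℂ) ⊗ₖ mEta (-n2) n1 ηp +
      (!![0, 0; 0, 1] : Matrix (Fin 2) (Fin 2) ℂ) ⊗ₖ mEta (-n2) n1 ηm =
    (Real.sin (Real.pi / 2 - (ηp - ηm) / 2) : ℂ) •
      (σ0 ⊗ₖ pauliVec ![(-n2) * Real.cos (-(ηp + ηm) / 2), n1 * Real.cos (-(ηp + ηm) / 2),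
        -Real.sin (-(ηp + ηm) / 2)]) +
    (Real.cos (Real.pi / 2 - (ηp - ηm) / 2) : ℂ) •
      (σ3 ⊗ₖ pauliVec ![(-n2) * Real.sin (-(ηp + ηm) / 2), n1 * Real.sin (-(ηp + ηm) / 2),
        Real.cos (-(ηp + ηm) / 2)]) := by
  have hc1 : Complex.cos ηp = Complex.cos ((ηp - ηm : ℂ) / 2) * Complex.cos (((-ηm : ℂ) + -ηp) / 2)
      + Complex.sin ((ηp - ηm : ℂ) / 2) * Complex.sin (((-ηm : ℂ) + -ηp) / 2) := by
    rw [← Complex.cos_sub]; congr 1; ring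
  have hc2 : Complex.sin ηp = Complex.sin ((ηp - ηm : ℂ) / 2) * Complex.cos (((-ηm : ℂ) + -ηp) / 2)
      - Complex.cos ((ηp - ηm : ℂ) / 2) * Complex.sin (((-ηm : ℂ) + -ηp) / 2) := by
    rw [← Complex.sin_sub]; congr 1; ring
  have hc3 : Complex.cos ηm = Complex.cos ((ηp - ηm : ℂ) / 2) * Complex.cos (((-ηm : ℂ) + -ηp) / 2)
      - Complex.sin ((ηp - ηm : ℂ) / 2) * Complex.sin (((-ηm : ℂ) + -ηp) / 2) := by
    rw [← Complex.cos_add, ← Complex.cos_neg]; congr 1; ring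
  have hc4 : Complex.sin ηm = -(Complex.sin ((ηp - ηm : ℂ) / 2) * Complex.cos (((-ηm : ℂ) + -ηp) / 2)
      + Complex.cos ((ηp - ηm : ℂ) / 2) * Complex.sin (((-ηm : ℂ) + -ηp) / 2)) := by
    rw [← Complex.sin_add, ← Complex.sin_neg]; congr 1; ring
  rw [Real.sin_pi_div_two_sub, Real.cos_pi_div_two_sub]
  ext i j
  fin_cases i <;> fin_cases j <;>
    · simp [mEta, pauliVec, σ0, σ1, σ2, σ3, Matrix.kroneckerMap_apply, Matrix.one_apply]
      try simp only [hc1, hc2, hc3, hc4]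
      try push_cast
      try ring
end
end
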